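/- arXiv:1712.07850 — 5 statements merged into one kernel-verified Lean document; each statement's English description precedes it below -/
import Mathlib

section
/- If A and B are two finite Blaschke products of the same degree n that agree at n distinct points of the open unit disc, then A ≡ B. -/
/-
Write `P_c = ∏ (X - c k)` and `Q_c = ∏ (1 - conj (c k) X)`, so that the Blaschke product with
zeros `c` is `P_c / Q_c`. The polynomial `F = P_a Q_b - P_b Q_a` has degree at most `2n`, vanishes
at the `λ_j`, and satisfies `w ^ (2n) * conj (F (conj w)⁻¹) = -F w`. Dividing `F` by `P_λ` and
reflecting the quotient shows `F = c P_λ Q_λ` for a constant `c`. On the unit circle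
`Q_c = w ^ n * conj P_c`, so `F = w ^ n (W - conj W)` with `W = P_a conj P_b`, while
`P_λ Q_λ = w ^ n |P_λ|²`; hence `c` is purely imaginary, and if `c ≠ 0` the function
`Q_a / (c Q_b)`, holomorphic on the closed disc, has negative real part on the circle but real
part `0` at the centre, which the maximum principle applied to its exponential forbids.
-/

open Complex ComplexConjugate Polynomial Metric Bornology

theorem DiffContOnCl.exists_mem_frontier_re_le {f : ℂ → ℂ} {U : Set ℂ} (hU : IsBounded U)
    (hf : DiffContOnCl ℂ f U) {z : ℂ} (hz : z ∈ closure U) :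
    ∃ w ∈ frontier U, (f z).re ≤ (f w).re := by
  obtain ⟨w, hw, hmax⟩ := Complex.exists_mem_frontier_isMaxOn_norm hU
    (closure_nonempty_iff.1 ⟨z, hz⟩) (differentiable_exp.comp_diffContOnCl hf)
  refine ⟨w, hw, ?_⟩
  simpa [Complex.norm_exp] using hmax hz

theorem re_eq_zero_of_sub_conj_eq_mul_ofReal {z c : ℂ} {r : ℝ} (hr : r ≠ 0)
    (h : z - conj z = c * r) : c.re = 0 := by
  have h' := congrArg re h
  rw [sub_conj, re_ofReal_mul, I_re, mul_zero, mul_comm, re_ofReal_mul] at h'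
  exact (mul_eq_zero.1 h'.symm).resolve_left hr

theorem re_conj_div_eq_of_sub_conj_eq {p q c : ℂ} {r : ℝ} (hq : q ≠ 0) (hc : c ≠ 0)
    (hcre : c.re = 0) (h : p * conj q - conj (p * conj q) = c * r) :
    (conj p / (c * conj q)).re = -(r / normSq q) / 2 := by
  have hcq : conj q ≠ 0 := (_root_.map_ne_zero _).2 hq
  have hcc : conj c = -c := Complex.ext (by simp [hcre]) (by simp)
  have key : ((2 * (conj p / (c * conj q)).re : ℝ) : ℂ) = ((-(r / normSq q) : ℝ) : ℂ) := by
    rw [← add_conj]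
    simp only [map_div₀, map_mul, conj_conj, hcc] at h ⊢
    push_cast
    rw [← mul_conj]
    field_simp
    linear_combination -h
  linarith [ofReal_injective key]

theorem eval_reflect_map_conj {p : ℂ[X]} {N : ℕ} (hp : p.natDegree ≤ N) {w : ℂ} (hw : w ≠ 0) :
    (reflect N (p.map (starRingEnd ℂ))).eval w = conj (p.eval (conj w)⁻¹) * w ^ N := by
  let := invertibleOfNonzero (inv_ne_zero hw)
  have h := eval₂_reflect_mul_pow (RingHom.id ℂ) w⁻¹ N (p.map (starRingEnd ℂ))
    (by rwa [natDegree_map])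
  have hw' : w⁻¹ = conj (conj w)⁻¹ := by simp
  rw [invOf_eq_inv, inv_inv, ← eval, ← eval, eval_map, hw', eval₂_at_apply, ← hw'] at h
  rw [← h, inv_pow, mul_assoc, inv_mul_cancel₀ (pow_ne_zero _ hw), mul_one]

section

variable {ι : Type*} [Fintype ι]

noncomputable def blaschkeNum (c : ι → ℂ) : ℂ[X] := ∏ k, (X - C (c k))

noncomputable def blaschkeDen (c : ι → ℂ) : ℂ[X] := ∏ k, (1 - C (conj (c k)) * X)

@[simp]
theorem eval_blaschkeNum (c : ι → ℂ) (z : ℂ) : (blaschkeNum c).eval z = ∏ k, (z - c k) := by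
  simp [blaschkeNum, eval_prod]

@[simp]
theorem eval_blaschkeDen (c : ι → ℂ) (z : ℂ) :
    (blaschkeDen c).eval z = ∏ k, (1 - conj (c k) * z) := by
  simp [blaschkeDen, eval_prod]

theorem blaschkeNum_monic (c : ι → ℂ) : (blaschkeNum c).Monic :=
  monic_prod_of_monic _ _ fun k _ => monic_X_sub_C (c k)

theorem natDegree_blaschkeNum (c : ι → ℂ) : (blaschkeNum c).natDegree = Fintype.card ι := by
  simp [blaschkeNum, natDegree_prod_of_monic _ _ fun k _ => monic_X_sub_C (c k)]

theorem natDegree_blaschkeDen_le (c : ι → ℂ) : (blaschkeDen c).natDegree ≤ Fintype.card ι := by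
  refine (natDegree_prod_le _ _).trans ?_
  have := Finset.sum_le_card_nsmul Finset.univ (fun k => (1 - C (conj (c k)) * X).natDegree) 1
    fun k _ => (natDegree_sub_le _ _).trans
      (max_le (by simp) ((natDegree_C_mul_le _ _).trans natDegree_X_le))
  rwa [Finset.card_univ, smul_eq_mul, mul_one] at this

theorem eval_blaschkeDen_ne_zero {c : ι → ℂ} (hc : ∀ k, ‖c k‖ < 1) {z : ℂ} (hz : ‖z‖ ≤ 1) :
    (blaschkeDen c).eval z ≠ 0 := by
  rw [eval_blaschkeDen, Finset.prod_ne_zero_iff]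
  intro k _ h
  have : ‖conj (c k) * z‖ < 1 := by
    rw [norm_mul, Complex.norm_conj]
    nlinarith [hc k, norm_nonneg z, norm_nonneg (c k)]
  rw [← sub_eq_zero.1 h] at this
  simp at this

theorem eval_blaschkeNum_ne_zero_of_norm_eq_one {c : ι → ℂ} (hc : ∀ k, ‖c k‖ < 1) {w : ℂ}
    (hw : ‖w‖ = 1) : (blaschkeNum c).eval w ≠ 0 := by
  rw [eval_blaschkeNum, Finset.prod_ne_zero_iff]
  intro k _ h
  have := hc k
  rw [← sub_eq_zero.1 h, hw] at this
  exact lt_irrefl _ this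

theorem conj_eval_blaschkeNum_inv_conj (c : ι → ℂ) {w : ℂ} (hw : w ≠ 0) :
    conj ((blaschkeNum c).eval (conj w)⁻¹) * w ^ Fintype.card ι = (blaschkeDen c).eval w := by
  rw [eval_blaschkeNum, eval_blaschkeDen, map_prod, ← Finset.card_univ, ← Finset.prod_const,
    ← Finset.prod_mul_distrib]
  refine Finset.prod_congr rfl fun k _ => ?_
  simp only [map_sub, map_inv₀, conj_conj]
  field_simp

theorem conj_eval_blaschkeDen_inv_conj (c : ι → ℂ) {w : ℂ} (hw : w ≠ 0) :
    conj ((blaschkeDen c).eval (conj w)⁻¹) * w ^ Fintype.card ι = (blaschkeNum c).eval w := by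
  rw [eval_blaschkeNum, eval_blaschkeDen, map_prod, ← Finset.card_univ, ← Finset.prod_const,
    ← Finset.prod_mul_distrib]
  refine Finset.prod_congr rfl fun k _ => ?_
  simp only [map_sub, map_one, map_mul, map_inv₀, conj_conj]
  field_simp

theorem eval_blaschkeDen_of_norm_eq_one (c : ι → ℂ) {w : ℂ} (hw : ‖w‖ = 1) :
    (blaschkeDen c).eval w = conj ((blaschkeNum c).eval w) * w ^ Fintype.card ι := by
  rw [← conj_eval_blaschkeNum_inv_conj c (norm_ne_zero_iff.1 (hw ▸ one_ne_zero)),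
    Complex.inv_eq_conj (by rwa [norm_conj]), conj_conj]

theorem isCoprime_blaschkeNum_blaschkeDen {c d : ι → ℂ} (hc : ∀ k, ‖c k‖ ≤ 1)
    (hd : ∀ k, ‖d k‖ < 1) : IsCoprime (blaschkeNum c) (blaschkeDen d) :=
  IsCoprime.prod_left fun k _ => (irreducible_X_sub_C _).coprime_iff_not_dvd.2 <| by
    rw [dvd_iff_isRoot]; exact eval_blaschkeDen_ne_zero hd (hc k)

theorem blaschkeNum_dvd {l : ι → ℂ} (hl : Function.Injective l) {F : ℂ[X]}
    (hF : ∀ j, F.IsRoot (l j)) : blaschkeNum l ∣ F :=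
  Finset.prod_dvd_of_coprime (fun _ _ _ _ hij => pairwise_coprime_X_sub_C hl hij)
    fun j _ => dvd_iff_isRoot.2 (hF j)

theorem eq_C_mul_blaschkeNum_mul_blaschkeDen {l : ι → ℂ} (hl : Function.Injective l)
    (hl_norm : ∀ j, ‖l j‖ < 1) {F : ℂ[X]} (hdeg : F.natDegree ≤ 2 * Fintype.card ι)
    (hroot : ∀ j, F.IsRoot (l j))
    (hrefl : ∀ w ≠ 0, conj (F.eval (conj w)⁻¹) * w ^ (2 * Fintype.card ι) = -F.eval w) :
    ∃ c, F = C c * blaschkeNum l * blaschkeDen l := by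
  set N := Fintype.card ι
  obtain ⟨G, rfl⟩ := blaschkeNum_dvd hl hroot
  have hG : G.natDegree ≤ N := by
    rcases eq_or_ne G 0 with rfl | hG0
    · simp
    · rw [(blaschkeNum_monic l).natDegree_mul' hG0, natDegree_blaschkeNum] at hdeg
      omega
  -- `G'` is the reflection `w ↦ w ^ N * conj (G (conj w)⁻¹)`; reflecting `F = P_l G` gives `hG'`.
  set G' := reflect N (G.map (starRingEnd ℂ))
  have hG' : blaschkeDen l * G' = -(blaschkeNum l * G) := by
    refine eq_of_infinite_eval_eq _ _
      ((Set.finite_singleton 0).infinite_compl.mono fun w (hw : w ≠ 0) => ?_)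
    rw [Set.mem_ofPred_eq, eval_mul, eval_neg, ← hrefl w hw, eval_reflect_map_conj hG hw,
      ← conj_eval_blaschkeNum_inv_conj l hw, eval_mul, map_mul]
    ring
  obtain ⟨M, hM⟩ : blaschkeNum l ∣ G' :=
    (isCoprime_blaschkeNum_blaschkeDen (fun k => (hl_norm k).le) hl_norm).dvd_of_dvd_mul_left
      ⟨-G, by rw [hG']; ring⟩
  have hMdeg : M.natDegree ≤ 0 := by
    rcases eq_or_ne M 0 with rfl | hM0
    · simp
    · have h : G'.natDegree ≤ N :=
        natDegree_reflect_le.trans (max_le le_rfl (by rwa [natDegree_map]))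
      rw [hM, (blaschkeNum_monic l).natDegree_mul' hM0, natDegree_blaschkeNum] at h
      omega
  refine ⟨-M.coeff 0, ?_⟩
  rw [map_neg, ← eq_C_of_natDegree_le_zero hMdeg, ← neg_neg (blaschkeNum l * G), ← hG', hM]
  ring

noncomputable def blaschkeCross (a b : ι → ℂ) : ℂ[X] :=
  blaschkeNum a * blaschkeDen b - blaschkeNum b * blaschkeDen a

theorem natDegree_blaschkeCross_le (a b : ι → ℂ) :
    (blaschkeCross a b).natDegree ≤ 2 * Fintype.card ι := by
  refine (natDegree_sub_le _ _).trans (max_le ?_ ?_) <;> refine natDegree_mul_le.trans ?_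
  · linarith [natDegree_blaschkeNum a, natDegree_blaschkeDen_le b]
  · linarith [natDegree_blaschkeNum b, natDegree_blaschkeDen_le a]

theorem conj_eval_blaschkeCross_inv_conj (a b : ι → ℂ) {w : ℂ} (hw : w ≠ 0) :
    conj ((blaschkeCross a b).eval (conj w)⁻¹) * w ^ (2 * Fintype.card ι) =
      -(blaschkeCross a b).eval w := by
  have hna := conj_eval_blaschkeNum_inv_conj a hw
  have hnb := conj_eval_blaschkeNum_inv_conj b hw
  have hda := conj_eval_blaschkeDen_inv_conj a hw
  have hdb := conj_eval_blaschkeDen_inv_conj b hw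
  simp only [blaschkeCross, eval_sub, eval_mul, map_sub, map_mul]
  linear_combination (conj ((blaschkeDen b).eval (conj w)⁻¹) * w ^ Fintype.card ι) * hna
    + (blaschkeDen a).eval w * hdb
    - (conj ((blaschkeDen a).eval (conj w)⁻¹) * w ^ Fintype.card ι) * hnb
    - (blaschkeDen b).eval w * hda

theorem eval_blaschkeCross_of_norm_eq_one (a b : ι → ℂ) {w : ℂ} (hw : ‖w‖ = 1) :
    (blaschkeCross a b).eval w = w ^ Fintype.card ι *
      ((blaschkeNum a).eval w * conj ((blaschkeNum b).eval w) -
        conj ((blaschkeNum a).eval w * conj ((blaschkeNum b).eval w))) := by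
  rw [blaschkeCross, eval_sub, eval_mul, eval_mul, eval_blaschkeDen_of_norm_eq_one a hw,
    eval_blaschkeDen_of_norm_eq_one b hw, map_mul, conj_conj]
  ring

theorem prod_blaschke_eq_iff_isRoot {a b : ι → ℂ} (ha : ∀ k, ‖a k‖ < 1) (hb : ∀ k, ‖b k‖ < 1)
    {z : ℂ} (hz : ‖z‖ ≤ 1) :
    (∏ k, (z - a k) / (1 - conj (a k) * z)) = (∏ k, (z - b k) / (1 - conj (b k) * z)) ↔
      (blaschkeCross a b).IsRoot z := by
  rw [Finset.prod_div_distrib, Finset.prod_div_distrib, ← eval_blaschkeNum a,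
    ← eval_blaschkeNum b, ← eval_blaschkeDen a, ← eval_blaschkeDen b,
    div_eq_div_iff (eval_blaschkeDen_ne_zero ha hz) (eval_blaschkeDen_ne_zero hb hz), IsRoot,
    blaschkeCross, eval_sub, eval_mul, eval_mul, sub_eq_zero]

theorem sub_conj_eq_of_blaschkeCross_eq {a b l : ι → ℂ} {c : ℂ}
    (h : blaschkeCross a b = C c * blaschkeNum l * blaschkeDen l) {w : ℂ} (hw : ‖w‖ = 1) :
    (blaschkeNum a).eval w * conj ((blaschkeNum b).eval w) -
        conj ((blaschkeNum a).eval w * conj ((blaschkeNum b).eval w)) =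
      c * normSq ((blaschkeNum l).eval w) := by
  have hcirc := congrArg (eval w) h
  rw [eval_blaschkeCross_of_norm_eq_one a b hw, eval_mul, eval_mul, eval_C,
    eval_blaschkeDen_of_norm_eq_one l hw] at hcirc
  have hw0 : w ≠ 0 := norm_ne_zero_iff.1 (hw ▸ one_ne_zero)
  refine mul_left_cancel₀ (pow_ne_zero (Fintype.card ι) hw0) ?_
  rw [← mul_conj]
  linear_combination hcirc

theorem eq_zero_of_blaschkeCross_eq {a b l : ι → ℂ} (hb : ∀ k, ‖b k‖ < 1)
    (hl : ∀ k, ‖l k‖ < 1) {c : ℂ}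
    (h : blaschkeCross a b = C c * blaschkeNum l * blaschkeDen l) : c = 0 := by
  by_contra hc
  have hcre : c.re = 0 := re_eq_zero_of_sub_conj_eq_mul_ofReal
    (normSq_pos.2 (eval_blaschkeNum_ne_zero_of_norm_eq_one hl norm_one)).ne'
    (sub_conj_eq_of_blaschkeCross_eq h norm_one)
  set g : ℂ → ℂ := fun z => (blaschkeDen a).eval z / (c * (blaschkeDen b).eval z)
  have hg : DiffContOnCl ℂ g (ball 0 1) := by
    refine DifferentiableOn.diffContOnCl ?_
    rw [closure_ball 0 one_ne_zero]
    refine (blaschkeDen a).differentiable.differentiableOn.div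
      ((blaschkeDen b).differentiable.const_mul c).differentiableOn fun z hz => ?_
    exact mul_ne_zero hc (eval_blaschkeDen_ne_zero hb (mem_closedBall_zero_iff.1 hz))
  have hre : ∀ w : ℂ, ‖w‖ = 1 → (g w).re < 0 := by
    intro w hw
    have hq := eval_blaschkeNum_ne_zero_of_norm_eq_one hb hw
    have hr := normSq_pos.2 (eval_blaschkeNum_ne_zero_of_norm_eq_one hl hw)
    have hwn : w ^ Fintype.card ι ≠ 0 := pow_ne_zero _ (norm_ne_zero_iff.1 (hw ▸ one_ne_zero))
    simp only [g]
    rw [eval_blaschkeDen_of_norm_eq_one a hw, eval_blaschkeDen_of_norm_eq_one b hw, ← mul_assoc,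
      mul_div_mul_right _ _ hwn,
      re_conj_div_eq_of_sub_conj_eq hq hc hcre (sub_conj_eq_of_blaschkeCross_eq h hw)]
    linarith [div_pos hr (normSq_pos.2 hq)]
  obtain ⟨w, hw, hle⟩ :=
    hg.exists_mem_frontier_re_le isBounded_ball (subset_closure (mem_ball_self one_pos))
  rw [frontier_ball 0 one_ne_zero, mem_sphere_zero_iff_norm] at hw
  have hg0 : (g 0).re = 0 := by simp [g, hcre]
  linarith [hre w hw]

end

/-- Two finite Blaschke products of the same degree `n` that agree at `n`
distinct points of the open unit disc are identical on the disc. -/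
theorem blaschke_eq_of_agree (n : ℕ) (a b : Fin n → ℂ)
    (ha : ∀ k, ‖a k‖ < 1) (hb : ∀ k, ‖b k‖ < 1)
    (lam : Fin n → ℂ) (hlaminj : Function.Injective lam)
    (hlam : ∀ j, ‖lam j‖ < 1)
    (heq : ∀ j, (∏ k, (lam j - a k) / (1 - (starRingEnd ℂ) (a k) * lam j)) =
      ∏ k, (lam j - b k) / (1 - (starRingEnd ℂ) (b k) * lam j)) :
    ∀ z, ‖z‖ < 1 →
      (∏ k, (z - a k) / (1 - (starRingEnd ℂ) (a k) * z)) =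
      ∏ k, (z - b k) / (1 - (starRingEnd ℂ) (b k) * z) := by
  obtain ⟨c, hc⟩ := eq_C_mul_blaschkeNum_mul_blaschkeDen hlaminj hlam
    (natDegree_blaschkeCross_le a b)
    (fun j => (prod_blaschke_eq_iff_isRoot ha hb (hlam j).le).1 (heq j))
    (fun _ hw => conj_eval_blaschkeCross_inv_conj a b hw)
  have hF : blaschkeCross a b = 0 := by
    rw [hc, eq_zero_of_blaschkeCross_eq hb hlam hc, C_0, zero_mul, zero_mul]
  intro z hz
  exact (prod_blaschke_eq_iff_isRoot ha hb hz.le).2 (by rw [hF, IsRoot, eval_zero])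
end

section
/- Let B be a finite Blaschke product of degree n and M ≠ id a Möbius transformation of the unit disc with B ∘ M = B, and let k ≥ 2 be the order of M (i.e., M^k = id and M^j ≠ id for 1 ≤ j < k). Then k divides n. -/
/-!
A Möbius automorphism `M` of finite order `k ≥ 2` has a fixed point `p` in the disc. Its
fixed-point equation is a quadratic whose roots have product of modulus one, and a fixed point
on the circle would conjugate `M` to an affine map `w ↦ ρ w + σ` with `ρ > 0`, which has finite
order only if it is the identity.

Conjugating by the Blaschke factor at `p` turns `M` into a rotation `w ↦ ω w` by a primitive
`k`-th root of unity and `B` into a Blaschke product `P / Q` of the same degree `n`, invariant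
under that rotation. As `P` and `Q` have no common root, `P(ωX) Q = P Q(ωX)` forces
`P(ωX) = ωⁿ P` and then `Q(ωX) = ωⁿ Q`; comparing constant terms of `Q` gives `ωⁿ = 1`.
-/

open Complex ComplexConjugate Function Metric Polynomial Set

noncomputable def blaschkeFactor (a z : ℂ) : ℂ := (z - a) / (1 - conj a * z)

noncomputable def mobius (e α : ℂ) (z : ℂ) : ℂ := e * blaschkeFactor α z

lemma one_sub_conj_mul_ne_zero {a z : ℂ} (h : ‖a‖ * ‖z‖ < 1) : 1 - conj a * z ≠ 0 := by
  intro h0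
  have h1 : ‖conj a * z‖ = 1 := by rw [← sub_eq_zero.1 h0, norm_one]
  rw [norm_mul, norm_conj] at h1
  linarith

lemma one_sub_conj_mul_ne_zero_of_norm_lt_one {a z : ℂ} (ha : ‖a‖ < 1) (hz : ‖z‖ < 1) :
    1 - conj a * z ≠ 0 :=
  one_sub_conj_mul_ne_zero (mul_lt_one_of_nonneg_of_lt_one_left (norm_nonneg a) ha hz.le)

lemma normSq_one_sub_conj_mul_sub_normSq_sub (a z : ℂ) :
    normSq (1 - conj a * z) - normSq (z - a) = (1 - normSq a) * (1 - normSq z) := by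
  simp only [normSq_apply, sub_re, sub_im, mul_re, mul_im, conj_re, conj_im, one_re, one_im]
  ring

lemma norm_blaschkeFactor_lt_one {a z : ℂ} (ha : ‖a‖ < 1) (hz : ‖z‖ < 1) :
    ‖blaschkeFactor a z‖ < 1 := by
  have hden := one_sub_conj_mul_ne_zero_of_norm_lt_one ha hz
  rw [blaschkeFactor, norm_div, div_lt_one (norm_pos_iff.2 hden),
    ← sq_lt_sq₀ (norm_nonneg _) (norm_nonneg _), ← normSq_eq_norm_sq, ← normSq_eq_norm_sq]
  have ha' : normSq a < 1 := by rw [normSq_eq_norm_sq]; nlinarith [norm_nonneg a]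
  have hz' : normSq z < 1 := by rw [normSq_eq_norm_sq]; nlinarith [norm_nonneg z]
  nlinarith [normSq_one_sub_conj_mul_sub_normSq_sub a z]

lemma blaschkeFactor_apply_div (b : ℂ) {x y : ℂ} (hy : y ≠ 0) :
    blaschkeFactor b (x / y) = (x - b * y) / (y - conj b * x) := by
  rw [blaschkeFactor, ← mul_div_mul_right _ _ hy, sub_mul, sub_mul, div_mul_cancel₀ _ hy,
    mul_assoc, div_mul_cancel₀ _ hy, one_mul]

lemma blaschkeFactor_div {x y : ℂ} (hy : y ≠ 0) (w : ℂ) :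
    blaschkeFactor (x / y) w = conj y * (y * w - x) / (y * (conj y - conj x * w)) := by
  have hy' : conj y ≠ 0 := (_root_.map_ne_zero _).2 hy
  rw [blaschkeFactor, map_div₀, ← mul_div_mul_left _ _ (mul_ne_zero hy' hy)]
  congr 1 <;> field_simp

lemma blaschkeFactor_neg_blaschkeFactor {a z : ℂ} (ha : ‖a‖ < 1) (hz : ‖z‖ < 1) :
    blaschkeFactor (-a) (blaschkeFactor a z) = z := by
  rw [blaschkeFactor.eq_1 a z,
    blaschkeFactor_apply_div _ (one_sub_conj_mul_ne_zero_of_norm_lt_one ha hz), map_neg,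
    div_eq_iff]
  · ring
  · convert one_sub_conj_mul_ne_zero_of_norm_lt_one ha ha using 1
    ring

lemma blaschkeFactor_blaschkeFactor_neg {a p w : ℂ} (ha : ‖a‖ < 1) (hp : ‖p‖ < 1)
    (hw : ‖w‖ < 1) :
    blaschkeFactor a (blaschkeFactor (-p) w) =
      (1 - a * conj p) / (1 - conj a * p) * blaschkeFactor (blaschkeFactor p a) w := by
  have hp' : ‖-p‖ < 1 := by rwa [norm_neg]
  have hpw := one_sub_conj_mul_ne_zero_of_norm_lt_one hp' hw
  have hpa : 1 - conj p * a ≠ 0 := one_sub_conj_mul_ne_zero_of_norm_lt_one hp ha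
  have hap : 1 - conj a * p ≠ 0 := one_sub_conj_mul_ne_zero_of_norm_lt_one ha hp
  have hden := one_sub_conj_mul_ne_zero_of_norm_lt_one ha (norm_blaschkeFactor_lt_one hp' hw)
  rw [blaschkeFactor.eq_1 (-p) w] at hden ⊢
  replace hden := mul_ne_zero hpw hden
  rw [mul_sub, mul_one, mul_left_comm, mul_div_cancel₀ _ hpw] at hden
  rw [blaschkeFactor_apply_div _ hpw, blaschkeFactor.eq_1 p a, blaschkeFactor_div hpa,
    mul_div_assoc', div_eq_div_iff hden]
  · simp only [map_sub, map_mul, map_one, map_neg, conj_conj]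
    rw [mul_comm p, ← mul_assoc ((1 - a * conj p) / _), div_mul_cancel₀ _ hap]
    ring
  · refine mul_ne_zero hpa ?_
    have hconj_pa : conj (1 - conj p * a) ≠ 0 := (_root_.map_ne_zero _).2 hpa
    have h := mul_ne_zero hconj_pa <|
      one_sub_conj_mul_ne_zero_of_norm_lt_one (norm_blaschkeFactor_lt_one hp ha) hw
    rwa [blaschkeFactor, map_div₀, mul_sub, mul_one, div_mul_eq_mul_div,
      mul_div_cancel₀ _ hconj_pa] at h

lemma ball_infinite (x : ℂ) {r : ℝ} (hr : 0 < r) : (ball x r).Infinite :=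
  infinite_of_mem_nhds x (ball_mem_nhds x hr)

lemma mobius_eq_self_iff {e α z : ℂ} (h : 1 - conj α * z ≠ 0) :
    mobius e α z = z ↔ e * (z - α) = z * (1 - conj α * z) := by
  rw [mobius, blaschkeFactor, mul_div_assoc', div_eq_iff h]

lemma mapsTo_mobius {e α : ℂ} (he : ‖e‖ = 1) (hα : ‖α‖ < 1) :
    MapsTo (mobius e α) (ball 0 1) (ball 0 1) := fun z hz => by
  rw [mem_ball_zero_iff] at hz ⊢
  rw [mobius, norm_mul, he, one_mul]
  exact norm_blaschkeFactor_lt_one hα hz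

lemma blaschkeFactor_mobius {e α p z : ℂ} (he : ‖e‖ = 1) (hα : ‖α‖ < 1) (hp : ‖p‖ < 1)
    (hfix : IsFixedPt (mobius e α) p) (hz : ‖z‖ < 1) :
    blaschkeFactor p (mobius e α z) =
      (e + p * conj α) / (1 + conj p * e * α) * blaschkeFactor p z := by
  have hF := (mobius_eq_self_iff (one_sub_conj_mul_ne_zero_of_norm_lt_one hα hp)).1 hfix
  have hee : e * conj e = 1 := by rw [mul_conj, normSq_eq_norm_sq, he]; norm_num
  have hG : conj p - conj α = e * conj p * (1 - α * conj p) := by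
    have h := congrArg conj hF
    simp only [map_mul, map_sub, map_one, conj_conj] at h
    linear_combination e * h - (conj p - conj α) * hee
  rw [mobius, blaschkeFactor.eq_1 α z, mul_div_assoc',
    blaschkeFactor_apply_div _ (one_sub_conj_mul_ne_zero_of_norm_lt_one hα hz), blaschkeFactor,
    ← mul_div_mul_comm]
  congr 1
  · linear_combination hF
  · linear_combination z * hG

lemma exists_isFixedPt_mobius_mem_closedBall {e α : ℂ} (he : ‖e‖ = 1) (hα : ‖α‖ < 1) :
    ∃ p ∈ closedBall (0 : ℂ) 1, IsFixedPt (mobius e α) p := by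
  by_cases hα0 : α = 0
  · exact ⟨0, by simp, by simp [IsFixedPt, mobius, blaschkeFactor, hα0]⟩
  have hα' : conj α ≠ 0 := (_root_.map_ne_zero _).2 hα0
  have hroot : ∀ z, ‖z‖ ≤ 1 → conj α * (z * z) + (e - 1) * z + -(e * α) = 0 →
      ∃ p ∈ closedBall (0 : ℂ) 1, IsFixedPt (mobius e α) p := fun z hz h => by
    refine ⟨z, mem_closedBall_zero_iff.2 hz, ?_⟩
    rw [IsFixedPt, mobius_eq_self_iff (one_sub_conj_mul_ne_zero (by nlinarith [norm_nonneg α]))]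
    linear_combination h
  obtain ⟨s, hs⟩ := IsAlgClosed.exists_eq_mul_self (discrim (conj α) (e - 1) (-(e * α)))
  set z₁ := (-(e - 1) + s) / (2 * conj α)
  set z₂ := (-(e - 1) - s) / (2 * conj α)
  have h₁ := (quadratic_eq_zero_iff hα' hs z₁).2 (Or.inl rfl)
  have h₂ := (quadratic_eq_zero_iff hα' hs z₂).2 (Or.inr rfl)
  have hprod : z₁ * z₂ = -(e * α) / conj α := by
    rw [discrim] at hs
    simp only [z₁, z₂]
    field_simp
    linear_combination hs
  have hnorm : ‖z₁‖ * ‖z₂‖ = 1 := by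
    rw [← norm_mul, hprod, norm_div, norm_neg, norm_mul, he, one_mul, norm_conj,
      div_self (norm_ne_zero_iff.2 hα0)]
  by_cases hz₁ : ‖z₁‖ ≤ 1
  · exact hroot z₁ hz₁ h₁
  · exact hroot z₂ (by nlinarith [norm_nonneg z₂]) h₂

lemma exists_affine_conj_mobius_of_isFixedPt_of_norm_eq_one {e α z₁ : ℂ} (he : ‖e‖ = 1)
    (hα : ‖α‖ < 1) (hz₁ : ‖z₁‖ = 1) (hfix : IsFixedPt (mobius e α) z₁) :
    ∃ ρ : ℝ, 0 < ρ ∧ ∃ σ : ℂ, ∀ z ∈ ball (0 : ℂ) 1,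
      (z₁ - mobius e α z)⁻¹ = ρ * (z₁ - z)⁻¹ + σ := by
  obtain ⟨t, ht_def⟩ : ∃ t, t = 1 - conj α * z₁ := ⟨_, rfl⟩
  have ht : t ≠ 0 := ht_def ▸ one_sub_conj_mul_ne_zero (by rw [hz₁, mul_one]; exact hα)
  have hF := (mobius_eq_self_iff (ht_def ▸ ht)).1 hfix
  have hz₁0 : z₁ ≠ 0 := norm_ne_zero_iff.1 (by rw [hz₁]; exact one_ne_zero)
  have hzz : z₁ * conj z₁ = 1 := by rw [mul_conj, normSq_eq_norm_sq, hz₁]; norm_num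
  -- The fixed point lying on the circle is what makes `t² / e = |t|²` real and positive.
  have ht_conj : t = e * conj t := by
    refine mul_left_cancel₀ hz₁0 ?_
    rw [ht_def]
    simp only [map_sub, map_one, map_mul, conj_conj]
    linear_combination -hF + e * α * hzz
  have hμ : 0 < 1 - normSq α := by rw [normSq_eq_norm_sq]; nlinarith [norm_nonneg α]
  have hμ' : (1 : ℂ) - α * conj α ≠ 0 := by rw [mul_conj]; exact_mod_cast hμ.ne'
  have he0 : e ≠ 0 := norm_ne_zero_iff.1 (by rw [he]; exact one_ne_zero)
  refine ⟨normSq t / (1 - normSq α), div_pos (normSq_pos.2 ht) hμ,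
    t * conj α / (e * (1 - α * conj α)), fun z hz => ?_⟩
  rw [mem_ball_zero_iff] at hz
  have hden := one_sub_conj_mul_ne_zero_of_norm_lt_one hα hz
  have hz₁z : z₁ - z ≠ 0 := sub_ne_zero.2 fun h => by rw [h] at hz₁; linarith
  have hsub : z₁ - mobius e α z =
      e * (1 - α * conj α) * (z₁ - z) / (t * (1 - conj α * z)) := by
    rw [mobius, blaschkeFactor, mul_div_assoc', sub_div' hden,
      div_eq_div_iff hden (mul_ne_zero ht hden)]
    linear_combination (1 - conj α * z) * (z₁ * (1 - conj α * z) - e * (z - α)) * ht_def -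
      (1 - conj α * z) ^ 2 * hF
  rw [hsub, inv_div]
  push_cast
  rw [← mul_conj, ← mul_conj, ← div_eq_mul_inv, div_div,
    div_add_div _ _ (mul_ne_zero hμ' hz₁z) (mul_ne_zero he0 hμ'),
    div_eq_div_iff (mul_ne_zero (mul_ne_zero he0 hμ') hz₁z)
      (mul_ne_zero (mul_ne_zero hμ' hz₁z) (mul_ne_zero he0 hμ'))]
  linear_combination (e * (1 - α * conj α) ^ 2 * (z₁ - z) * t) * (ht_conj - ht_def)

lemma eqOn_id_of_affine_conj {g ψ : ℂ → ℂ} {s : Set ℂ} {ρ : ℝ} {σ : ℂ} {k : ℕ}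
    (hg : MapsTo g s s) (hψ : InjOn ψ s) (hs : s.Nontrivial) (hρ : 0 < ρ)
    (hconj : ∀ z ∈ s, ψ (g z) = ρ * ψ z + σ) (hk : k ≠ 0) (hord : ∀ z ∈ s, g^[k] z = z) :
    EqOn g id s := by
  have hiter : ∀ j, ∀ z ∈ s,
      ψ (g^[j] z) = ρ ^ j * ψ z + σ * ∑ i ∈ Finset.range j, (ρ : ℂ) ^ i := by
    intro j
    induction j with
    | zero => simp
    | succ j ih =>
      intro z hz
      rw [iterate_succ_apply', hconj _ (hg.iterate j hz), ih z hz, geom_sum_succ]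
      ring
  obtain ⟨a, ha, b, hb, hab⟩ := hs
  have hρk : ρ ^ k = 1 := by
    have h := congrArg₂ (· - ·) (hiter k a ha) (hiter k b hb)
    simp only [hord a ha, hord b hb, add_sub_add_right_eq_sub, ← mul_sub] at h
    have h' := mul_right_cancel₀ (sub_ne_zero.2 (hψ.ne ha hb hab)) (h.symm.trans (one_mul _).symm)
    exact_mod_cast h'
  have hρ1 : ρ = 1 := (pow_eq_one_iff_of_nonneg hρ.le hk).1 hρk
  have hσ : σ = 0 := by
    have h := hiter k a ha
    simp only [hord a ha, hρ1, ofReal_one, one_pow, one_mul, Finset.sum_const,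
      Finset.card_range, nsmul_eq_mul, mul_one] at h
    exact (mul_eq_zero.1 (add_eq_left.1 h.symm)).resolve_right (Nat.cast_ne_zero.2 hk)
  intro z hz
  refine hψ (hg hz) hz ?_
  rw [hconj z hz, hρ1, hσ, ofReal_one, one_mul, add_zero, id]

lemma exists_isFixedPt_mobius_mem_ball {e α : ℂ} {k : ℕ} (he : ‖e‖ = 1) (hα : ‖α‖ < 1)
    (hk : k ≠ 0) (hord : ∀ z ∈ ball (0 : ℂ) 1, (mobius e α)^[k] z = z)
    (hne : ∃ z ∈ ball (0 : ℂ) 1, mobius e α z ≠ z) :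
    ∃ p ∈ ball (0 : ℂ) 1, IsFixedPt (mobius e α) p := by
  obtain ⟨p, hp, hfix⟩ := exists_isFixedPt_mobius_mem_closedBall he hα
  rcases (mem_closedBall_zero_iff.1 hp).lt_or_eq with hp | hp
  · exact ⟨p, mem_ball_zero_iff.2 hp, hfix⟩
  obtain ⟨ρ, hρ, σ, hconj⟩ := exists_affine_conj_mobius_of_isFixedPt_of_norm_eq_one he hα hp hfix
  have hψ : InjOn (fun z => (p - z)⁻¹) (ball (0 : ℂ) 1) := fun z _ w _ h => by simpa using h
  obtain ⟨z, hz, hMz⟩ := hne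
  exact absurd (eqOn_id_of_affine_conj (mapsTo_mobius he hα) hψ
    (ball_infinite 0 one_pos).nontrivial hρ hconj hk hord hz) hMz

lemma isPrimitiveRoot_of_blaschkeFactor_conj {g : ℂ → ℂ} {p ω : ℂ} {k : ℕ} (hp : ‖p‖ < 1)
    (hg : MapsTo g (ball 0 1) (ball 0 1))
    (hconj : ∀ z ∈ ball (0 : ℂ) 1, blaschkeFactor p (g z) = ω * blaschkeFactor p z)
    (hk : 0 < k) (hord : ∀ z ∈ ball (0 : ℂ) 1, g^[k] z = z)
    (hmin : ∀ j : ℕ, 0 < j → j < k → ∃ z ∈ ball (0 : ℂ) 1, g^[j] z ≠ z) :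
    IsPrimitiveRoot ω k := by
  have hiter : ∀ j, ∀ z ∈ ball (0 : ℂ) 1,
      blaschkeFactor p (g^[j] z) = ω ^ j * blaschkeFactor p z := by
    intro j
    induction j with
    | zero => simp
    | succ j ih =>
      intro z hz
      rw [iterate_succ_apply', hconj _ (hg.iterate j hz), ih z hz, pow_succ]
      ring
  refine IsPrimitiveRoot.mk_of_lt ω hk ?_ fun j hj hjk hω => ?_
  · obtain ⟨z, hz, hzp⟩ := (ball_infinite 0 one_pos).nontrivial.exists_ne p
    have hφ : blaschkeFactor p z ≠ 0 := div_ne_zero (sub_ne_zero.2 hzp)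
      (one_sub_conj_mul_ne_zero_of_norm_lt_one hp (mem_ball_zero_iff.1 hz))
    have h := hiter k z hz
    rw [hord z hz] at h
    exact (mul_eq_right₀ hφ).1 h.symm
  · obtain ⟨z, hz, hne⟩ := hmin j hj hjk
    apply hne
    have h := congrArg (blaschkeFactor (-p)) (hiter j z hz)
    rwa [hω, one_mul, blaschkeFactor_neg_blaschkeFactor hp (mem_ball_zero_iff.1 hz),
      blaschkeFactor_neg_blaschkeFactor hp (mem_ball_zero_iff.1 (hg.iterate j hz))] at h

lemma pow_natDegree_eq_one_of_comp_C_mul_X {K : Type*} [Field K] {P Q : K[X]} {ω : K}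
    (hP : P.Monic) (hω : ω ≠ 0) (hPQ : IsCoprime P Q) (hQ : Q.eval 0 ≠ 0)
    (h : P.comp (C ω * X) * Q = P * Q.comp (C ω * X)) : ω ^ P.natDegree = 1 := by
  have hdeg : (C ω * X).natDegree = 1 := natDegree_C_mul_X ω hω
  have hPcomp : P.comp (C ω * X) = C (ω ^ P.natDegree) * P := by
    have hdvd : P ∣ P.comp (C ω * X) := hPQ.dvd_of_dvd_mul_right ⟨_, h⟩
    rw [eq_leadingCoeff_mul_of_monic_of_dvd_of_natDegree_le hP hdvd
        (by rw [natDegree_comp, hdeg, mul_one]),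
      leadingCoeff_comp (by rw [hdeg]; exact one_ne_zero), hP.leadingCoeff, one_mul,
      leadingCoeff_C_mul_X]
  have hQcomp : Q.comp (C ω * X) = C (ω ^ P.natDegree) * Q := by
    refine mul_left_cancel₀ hP.ne_zero ?_
    rw [← h, hPcomp]
    ring
  have h0 := congrArg (Polynomial.eval 0) hQcomp
  rw [eval_comp, eval_mul, eval_C, eval_X, mul_zero, eval_mul, eval_C] at h0
  exact (mul_eq_right₀ hQ).1 h0.symm

lemma pow_card_eq_one_of_prod_blaschkeFactor_mul_eq {ι : Type*} [Fintype ι] {b : ι → ℂ}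
    {ω : ℂ} (hb : ∀ i, ‖b i‖ < 1) (hω : ‖ω‖ = 1)
    (h : ∀ w ∈ ball (0 : ℂ) 1,
      ∏ i, blaschkeFactor (b i) (ω * w) = ∏ i, blaschkeFactor (b i) w) :
    ω ^ Fintype.card ι = 1 := by
  set P : ℂ[X] := ∏ i, (X - C (b i))
  set Q : ℂ[X] := ∏ i, (1 - C (conj (b i)) * X)
  have hPeval : ∀ z, P.eval z = ∏ i, (z - b i) := fun z => by simp [P, eval_prod]
  have hQeval : ∀ z, Q.eval z = ∏ i, (1 - conj (b i) * z) := fun z => by simp [Q, eval_prod]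
  have hQne : ∀ z, ‖z‖ < 1 → Q.eval z ≠ 0 := fun z hz => by
    rw [hQeval]
    exact Finset.prod_ne_zero_iff.2 fun i _ => one_sub_conj_mul_ne_zero_of_norm_lt_one (hb i) hz
  have hP : P.Monic := monic_prod_of_monic _ _ fun i _ => monic_X_sub_C (b i)
  have hPdeg : P.natDegree = Fintype.card ι := by simp [P]
  have hω0 : ω ≠ 0 := norm_ne_zero_iff.1 (by rw [hω]; exact one_ne_zero)
  have hPQ : IsCoprime P Q := by
    rw [isCoprime_iff_aeval_ne_zero_of_isAlgClosed ℂ ℂ]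
    intro z
    by_cases hz : P.eval z = 0
    · right
      rw [hPeval, Finset.prod_eq_zero_iff] at hz
      obtain ⟨i, -, hi⟩ := hz
      rw [sub_eq_zero.1 hi]
      exact hQne _ (hb i)
    · left
      simpa using hz
  rw [← hPdeg]
  refine pow_natDegree_eq_one_of_comp_C_mul_X hP hω0 hPQ (by simpa using hQne 0 (by simp)) ?_
  refine eq_of_infinite_eval_eq _ _ ((ball_infinite 0 one_pos).mono fun w hw => ?_)
  have hw' := mem_ball_zero_iff.1 hw
  have hωw : ‖ω * w‖ < 1 := by rwa [norm_mul, hω, one_mul]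
  have h' := h w hw
  simp only [blaschkeFactor, Finset.prod_div_distrib, ← hPeval, ← hQeval] at h'
  rw [div_eq_div_iff (hQne _ hωw) (hQne _ hw')] at h'
  simp only [mem_ofPred_eq, eval_mul, eval_comp, eval_C, eval_X]
  linear_combination h'

lemma exists_prod_blaschkeFactor_comp_neg {ι : Type*} [Fintype ι] {a : ι → ℂ} {p : ℂ}
    (ha : ∀ i, ‖a i‖ < 1) (hp : ‖p‖ < 1) :
    ∃ u ≠ 0, ∀ w ∈ ball (0 : ℂ) 1,
      ∏ i, blaschkeFactor (a i) (blaschkeFactor (-p) w) =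
        u * ∏ i, blaschkeFactor (blaschkeFactor p (a i)) w := by
  refine ⟨∏ i, (1 - a i * conj p) / (1 - conj (a i) * p), ?_, fun w hw => ?_⟩
  · refine Finset.prod_ne_zero_iff.2 fun i _ => div_ne_zero ?_
      (one_sub_conj_mul_ne_zero_of_norm_lt_one (ha i) hp)
    rw [mul_comm]
    exact one_sub_conj_mul_ne_zero_of_norm_lt_one hp (ha i)
  · rw [← Finset.prod_mul_distrib]
    exact Finset.prod_congr rfl fun i _ =>
      blaschkeFactor_blaschkeFactor_neg (ha i) hp (mem_ball_zero_iff.1 hw)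

lemma prod_blaschkeFactor_mul_eq_of_conj {ι : Type*} [Fintype ι] {a : ι → ℂ} {g : ℂ → ℂ}
    {p ω : ℂ} (ha : ∀ i, ‖a i‖ < 1) (hp : ‖p‖ < 1) (hω : ‖ω‖ = 1)
    (hg : MapsTo g (ball 0 1) (ball 0 1))
    (hconj : ∀ z ∈ ball (0 : ℂ) 1, blaschkeFactor p (g z) = ω * blaschkeFactor p z)
    (hinv : ∀ z ∈ ball (0 : ℂ) 1,
      ∏ i, blaschkeFactor (a i) (g z) = ∏ i, blaschkeFactor (a i) z) :
    ∀ w ∈ ball (0 : ℂ) 1, ∏ i, blaschkeFactor (blaschkeFactor p (a i)) (ω * w) =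
      ∏ i, blaschkeFactor (blaschkeFactor p (a i)) w := by
  obtain ⟨u, hu, hcomp⟩ := exists_prod_blaschkeFactor_comp_neg ha hp
  intro w hw
  have hw' := mem_ball_zero_iff.1 hw
  have hp' : ‖-p‖ < 1 := by rwa [norm_neg]
  have hz : blaschkeFactor (-p) w ∈ ball (0 : ℂ) 1 :=
    mem_ball_zero_iff.2 (norm_blaschkeFactor_lt_one hp' hw')
  have hgz : g (blaschkeFactor (-p) w) = blaschkeFactor (-p) (ω * w) := by
    have h := blaschkeFactor_neg_blaschkeFactor hp (mem_ball_zero_iff.1 (hg hz))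
    have hφ : blaschkeFactor p (blaschkeFactor (-p) w) = w := by
      simpa using blaschkeFactor_neg_blaschkeFactor hp' hw'
    rwa [hconj _ hz, hφ, eq_comm] at h
  have h := hinv _ hz
  rw [hgz, hcomp _ (mem_ball_zero_iff.2 (by rwa [norm_mul, hω, one_mul])), hcomp _ hw] at h
  exact mul_left_cancel₀ hu h

/-- If `B` is a finite Blaschke product of degree `n`, `M ≠ id` a Möbius
transformation of the disc with `B ∘ M = B`, and `k ≥ 2` is the order of `M`,
then `k` divides `n`. -/
theorem order_dvd_degree (n : ℕ) (c : ℂ) (hc : ‖c‖ = 1)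
    (a : Fin n → ℂ) (ha : ∀ i, ‖a i‖ < 1) (B : ℂ → ℂ)
    (hB : ∀ z, B z = c * ∏ i, (z - a i) / (1 - (starRingEnd ℂ) (a i) * z))
    (e α : ℂ) (he : ‖e‖ = 1) (hα : ‖α‖ < 1) (M : ℂ → ℂ)
    (hM : ∀ z, M z = e * (z - α) / (1 - (starRingEnd ℂ) α * z))
    (hne : ∃ z ∈ Metric.ball (0 : ℂ) 1, M z ≠ z)
    (hinv : ∀ z ∈ Metric.ball (0 : ℂ) 1, B (M z) = B z)
    (k : ℕ) (hk : 2 ≤ k)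
    (hord : ∀ z ∈ Metric.ball (0 : ℂ) 1, M^[k] z = z)
    (hmin : ∀ j : ℕ, 0 < j → j < k → ∃ z ∈ Metric.ball (0 : ℂ) 1, M^[j] z ≠ z) :
    k ∣ n := by
  obtain rfl : M = mobius e α :=
    funext fun z => by rw [hM, mobius, blaschkeFactor, mul_div_assoc]
  obtain ⟨p, hp, hfix⟩ := exists_isFixedPt_mobius_mem_ball he hα (by omega) hord hne
  rw [mem_ball_zero_iff] at hp
  have hconj z (hz : z ∈ ball (0 : ℂ) 1) :=
    blaschkeFactor_mobius he hα hp hfix (mem_ball_zero_iff.1 hz)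
  have hω : IsPrimitiveRoot _ k :=
    isPrimitiveRoot_of_blaschkeFactor_conj hp (mapsTo_mobius he hα) hconj (by omega) hord hmin
  have hω1 := hω.norm'_eq_one (by omega)
  have hc0 : c ≠ 0 := norm_ne_zero_iff.1 (by rw [hc]; exact one_ne_zero)
  have hinvB : ∀ z ∈ ball (0 : ℂ) 1,
      ∏ i, blaschkeFactor (a i) (mobius e α z) = ∏ i, blaschkeFactor (a i) z := fun z hz => by
    have h := hinv z hz
    rw [hB, hB] at h
    exact mul_left_cancel₀ hc0 h
  refine hω.dvd_of_pow_eq_one n ?_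
  simpa using pow_card_eq_one_of_prod_blaschkeFactor_mul_eq
    (fun i => norm_blaschkeFactor_lt_one hp (ha i)) hω1
    (prod_blaschkeFactor_mul_eq_of_conj ha hp hω1 (mapsTo_mobius he hα) hconj hinvB)
end

section
/- Let B(z) = z·(z-a₁)(z+\bar{c}a₁)/((1-\bar{a₁}z)(1+c\bar{a₁}z)) with a₁ ∈ 𝔻 \ {0}, |c| = 1 and c + \bar{c} = -1 - |a₁|². Then the group of continuous self-maps M of 𝔻 with B ∘ M = B is generated by M(z) = c(z + \bar{c}a₁)/(1 + c\bar{a₁}z), which has order 3. -/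
/-!
Write `b`, `k` for `conj a₁`, `conj c`; the algebra only uses `c k = 1` and
`c + k = -1 - a₁ b`, so it is done over an arbitrary field. Then
`M (M z) = k (z - a₁) / (1 - b z)`, whence `M³ = id` and `B z = z · M z · M (M z)`: `B` is the
product over an `M`-orbit, so it is `M`-invariant. Writing `B = P / Q`, the cross difference
`P w Q z - P z Q w` factors as `(w - z)(w - M z)(w - M² z)` up to the denominators, so the fibres
of `B` in the disc are exactly the `M`-orbits.

If `N` is continuous with `B ∘ N = B`, then `N z` lies in the orbit of `z`. Off the finitely many
fixed points of `M` the orbit consists of three distinct points depending continuously on `z`,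
so each of `{N = id}`, `{N = M}`, `{N = M²}` is closed and is the complement of the other two.
The disc minus finitely many points is connected, so one of them is everything; at the fixed
points the three maps agree.
-/

open Complex ComplexConjugate Metric Function Set

theorem exists_eq_of_forall_exists_eq {X Y ι : Type*} [TopologicalSpace X]
    [PreconnectedSpace X] [TopologicalSpace Y] [T2Space Y] [Finite ι] [Nonempty ι]
    {f : ι → X → Y} (hf : ∀ i, Continuous (f i)) (hinj : ∀ x, Injective (f · x)) {g : X → Y}
    (hg : Continuous g) (hgf : ∀ x, ∃ i, g x = f i x) : ∃ i, g = f i := by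
  rcases isEmpty_or_nonempty X with hX | ⟨⟨x₀⟩⟩
  · exact ⟨Classical.arbitrary ι, funext isEmptyElim⟩
  obtain ⟨i, hi⟩ := hgf x₀
  have hclosed (j : ι) : IsClosed {x | g x = f j x} := isClosed_eq hg (hf j)
  have hcompl : {x | g x = f i x}ᶜ = ⋃ j : {j // j ≠ i}, {x | g x = f j x} := by
    ext x
    simp only [mem_compl_iff, mem_ofPred_eq, mem_iUnion]
    constructor
    · intro hx
      obtain ⟨j, hj⟩ := hgf x
      exact ⟨⟨j, by rintro rfl; exact hx hj⟩, hj⟩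
    · rintro ⟨⟨j, hji⟩, hj⟩ hi'
      exact hji (hinj x (hj.symm.trans hi'))
  have hopen : IsOpen {x | g x = f i x} := by
    rw [← isClosed_compl_iff, hcompl]
    exact isClosed_iUnion_of_finite fun j => hclosed j
  have huniv := IsClopen.eq_univ ⟨hclosed i, hopen⟩ ⟨x₀, hi⟩
  exact ⟨i, funext fun x => (huniv ▸ mem_univ x : x ∈ {x | g x = f i x})⟩

theorem exists_eqOn_iterate_of_isPeriodicPt {X : Type*} [TopologicalSpace X] [T2Space X]
    {U : Set X} {T N : X → X} {p : ℕ} (hp : p.Prime) (hT : ContinuousOn T U)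
    (hTU : MapsTo T U U) (hper : ∀ x ∈ U, IsPeriodicPt T p x)
    (hconn : IsPreconnected (U \ fixedPoints T))
    (hN : ContinuousOn N U) (horb : ∀ x ∈ U, ∃ j, N x = T^[j] x) : ∃ j, EqOn N T^[j] U := by
  have hS : U \ fixedPoints T ⊆ U := sdiff_subset
  have := Subtype.preconnectedSpace hconn
  have : NeZero p := ⟨hp.ne_zero⟩
  obtain ⟨i, hi⟩ := exists_eq_of_forall_exists_eq (ι := Fin p)
    (f := fun i (x : ↥(U \ fixedPoints T)) => T^[i] x) (g := fun x => N x)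
    (fun i => ((hT.iterate hTU i).mono hS).domRestrict)
    (fun x i j hij => by
      have hmin : minimalPeriod T x = p :=
        (hp.eq_one_or_self_of_dvd _ (hper x (hS x.2)).minimalPeriod_dvd).resolve_left
          fun h => x.2.2 (minimalPeriod_eq_one_iff_isFixedPt.mp h)
      exact Fin.ext (iterate_injOn_Iio_minimalPeriod (by simp [hmin]) (by simp [hmin]) hij))
    (hN.mono hS).domRestrict
    (fun x => by
      obtain ⟨j, hj⟩ := horb x (hS x.2)
      exact ⟨⟨j % p, Nat.mod_lt _ hp.pos⟩,
        hj.trans ((hper x (hS x.2)).iterate_mod_apply j).symm⟩)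
  refine ⟨i, fun x hx => ?_⟩
  by_cases hfix : IsFixedPt T x
  · obtain ⟨j, hj⟩ := horb x hx
    rw [hj, (hfix.iterate j).eq, (hfix.iterate i).eq]
  · exact congrFun hi ⟨x, hx, hfix⟩

theorem Set.Countable.isPathConnected_ball_diff {E : Type*} [NormedAddCommGroup E]
    [NormedSpace ℝ E] (h : 1 < Module.rank ℝ E) {s : Set E} (hs : s.Countable) :
    IsPathConnected (ball (0 : E) 1 \ s) := by
  let e : E → E := fun x => Homeomorph.unitBall x
  have himage : e '' (e ⁻¹' s)ᶜ = ball (0 : E) 1 \ s := by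
    ext y
    constructor
    · rintro ⟨x, hx, rfl⟩
      exact ⟨(Homeomorph.unitBall x).2, hx⟩
    · rintro ⟨hy, hys⟩
      exact ⟨Homeomorph.unitBall.symm ⟨y, hy⟩, by simpa [e] using hys, by simp [e]⟩
  rw [← himage]
  exact ((hs.preimage (Subtype.val_injective.comp Homeomorph.unitBall.injective))
    |>.isPathConnected_compl_of_one_lt_rank h).image
      (continuous_subtype_val.comp Homeomorph.unitBall.continuous)

theorem finite_setOf_quadratic_eq_zero {K : Type*} [Field K] [IsAlgClosed K] [NeZero (2 : K)]
    {p q r : K} (hp : p ≠ 0) : {x | p * (x * x) + q * x + r = 0}.Finite := by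
  obtain ⟨s, hs⟩ := IsAlgClosed.exists_eq_mul_self (discrim p q r)
  exact (toFinite {(-q + s) / (2 * p), (-q - s) / (2 * p)}).subset
    fun x hx => (quadratic_eq_zero_iff hp hs x).mp hx

section Algebra

variable {K : Type*} [Field K] {a b c k : K}

def deckMap (a b c k z : K) : K := c * (z + k * a) / (1 + c * b * z)

def blaschke (a b c k z : K) : K := z * (z - a) * (z + k * a) / ((1 - b * z) * (1 + c * b * z))

theorem deckMap_deckMap (hck : c * k = 1) (hsum : c + k = -1 - a * b) (hab : a * b ≠ 1) {z : K}
    (hz : 1 + c * b * z ≠ 0) (hz' : 1 - b * z ≠ 0) :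
    deckMap a b c k (deckMap a b c k z) = k * (z - a) / (1 - b * z) := by
  have hc : c ≠ 0 := left_ne_zero_of_mul_eq_one hck
  have hc1 : 1 + c ≠ 0 := by
    intro h
    obtain rfl : c = -1 := by linear_combination h
    obtain rfl : k = -1 := by linear_combination -hck
    exact hab (by linear_combination hsum)
  have hnum : c * (deckMap a b c k z + k * a) = -(1 + c) * (z - a) / (1 + c * b * z) := by
    rw [deckMap, div_add' _ _ _ hz, mul_div_assoc']
    congr 1
    linear_combination (a * b * c * z + a * c + a - z) * hck + c * z * hsum
  have hden : 1 + c * b * deckMap a b c k z = -c * (1 + c) * (1 - b * z) / (1 + c * b * z) := by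
    rw [deckMap, mul_div_assoc', one_add_div hz]
    congr 1
    linear_combination (a * b * c - 1) * hck + c * hsum
  rw [deckMap, hnum, hden, div_div_div_cancel_right₀ hz,
    div_eq_div_iff (by simp [hc, hc1, hz']) hz']
  linear_combination (1 + c) * (z - a) * (1 - b * z) * hck

theorem deckMap_deckMap_deckMap (hck : c * k = 1) (hsum : c + k = -1 - a * b) (hab : a * b ≠ 1)
    {z : K} (hz : 1 + c * b * z ≠ 0) (hz' : 1 - b * z ≠ 0) :
    deckMap a b c k (deckMap a b c k (deckMap a b c k z)) = z := by
  have hnum : c * (k * (z - a) / (1 - b * z) + k * a) = (1 - a * b) * z / (1 - b * z) := by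
    rw [div_add' _ _ _ hz', mul_div_assoc']
    congr 1
    linear_combination z * (1 - a * b) * hck
  have hden : 1 + c * b * (k * (z - a) / (1 - b * z)) = (1 - a * b) / (1 - b * z) := by
    rw [mul_div_assoc', one_add_div hz']
    congr 1
    linear_combination b * (z - a) * hck
  rw [deckMap_deckMap hck hsum hab hz hz', deckMap, hnum, hden, div_div_div_cancel_right₀ hz',
    mul_div_cancel_left₀ z (sub_ne_zero.mpr hab.symm)]

theorem blaschke_eq_mul_deckMap (hck : c * k = 1) (hsum : c + k = -1 - a * b) (hab : a * b ≠ 1)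
    {z : K} (hz : 1 + c * b * z ≠ 0) (hz' : 1 - b * z ≠ 0) :
    blaschke a b c k z = z * deckMap a b c k z * deckMap a b c k (deckMap a b c k z) := by
  rw [deckMap_deckMap hck hsum hab hz hz', blaschke, deckMap, mul_div_assoc' z, div_mul_div_comm,
    div_eq_div_iff (mul_ne_zero hz' hz) (mul_ne_zero hz hz')]
  linear_combination -(z * (z - a) * (z + k * a) * ((1 - b * z) * (1 + c * b * z))) * hck

theorem blaschke_deckMap (hck : c * k = 1) (hsum : c + k = -1 - a * b) (hab : a * b ≠ 1) {z : K}
    (hz : 1 + c * b * z ≠ 0) (hz' : 1 - b * z ≠ 0)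
    (hm : 1 + c * b * deckMap a b c k z ≠ 0) (hm' : 1 - b * deckMap a b c k z ≠ 0) :
    blaschke a b c k (deckMap a b c k z) = blaschke a b c k z := by
  rw [blaschke_eq_mul_deckMap hck hsum hab hm hm', deckMap_deckMap_deckMap hck hsum hab hz hz',
    blaschke_eq_mul_deckMap hck hsum hab hz hz']
  ring

theorem cross_sub_eq_mul_orbit (hck : c * k = 1) (hsum : c + k = -1 - a * b) (z w : K) :
    w * (w - a) * (w + k * a) * ((1 - b * z) * (1 + c * b * z)) -
      z * (z - a) * (z + k * a) * ((1 - b * w) * (1 + c * b * w)) =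
      (w - z) * ((1 + c * b * z) * w - c * (z + k * a)) * ((1 - b * z) * w - k * (z - a)) := by
  grind

theorem eq_or_eq_deckMap_of_blaschke_eq (hck : c * k = 1) (hsum : c + k = -1 - a * b)
    (hab : a * b ≠ 1) {z w : K} (hz : 1 + c * b * z ≠ 0) (hz' : 1 - b * z ≠ 0)
    (hw : 1 + c * b * w ≠ 0) (hw' : 1 - b * w ≠ 0)
    (h : blaschke a b c k w = blaschke a b c k z) :
    w = z ∨ w = deckMap a b c k z ∨ w = deckMap a b c k (deckMap a b c k z) := by
  have key : (w - z) * ((1 + c * b * z) * w - c * (z + k * a)) *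
      ((1 - b * z) * w - k * (z - a)) = 0 := by
    rw [blaschke, blaschke, div_eq_div_iff (mul_ne_zero hw' hw) (mul_ne_zero hz' hz)] at h
    rw [← cross_sub_eq_mul_orbit hck hsum, h, sub_self]
  simp only [mul_eq_zero, sub_eq_zero] at key
  rw [deckMap_deckMap hck hsum hab hz hz', deckMap, eq_div_iff hz, eq_div_iff hz', mul_comm w,
    mul_comm w]
  tauto

end Algebra

section Disc

variable {a c : ℂ}

theorem norm_sub_lt_norm_one_sub_conj_mul {u v : ℂ} (hu : ‖u‖ < 1) (hv : ‖v‖ < 1) :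
    ‖v - u‖ < ‖1 - conj u * v‖ := by
  have key : ‖1 - conj u * v‖ ^ 2 - ‖v - u‖ ^ 2 = (1 - ‖u‖ ^ 2) * (1 - ‖v‖ ^ 2) := by
    simp only [Complex.sq_norm, normSq_apply, sub_re, sub_im, mul_re, mul_im, one_re, one_im,
      conj_re, conj_im]
    ring
  have hpos : 0 < (1 - ‖u‖ ^ 2) * (1 - ‖v‖ ^ 2) := by
    apply mul_pos <;> nlinarith [norm_nonneg u, norm_nonneg v]
  exact lt_of_pow_lt_pow_left₀ 2 (norm_nonneg _) (by linarith)

theorem mul_conj_eq_one (hc : ‖c‖ = 1) : c * conj c = 1 := by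
  rw [mul_conj', hc]; norm_num

theorem mul_conj_ne_one (ha : ‖a‖ < 1) : a * conj a ≠ 1 := by
  rw [mul_conj']
  exact_mod_cast (pow_lt_one₀ (norm_nonneg a) ha two_ne_zero).ne

theorem deckMap_denominators_ne_zero (ha : ‖a‖ < 1) (hc : ‖c‖ = 1) {z : ℂ}
    (hz : z ∈ ball (0 : ℂ) 1) : 1 + c * conj a * z ≠ 0 ∧ 1 - conj a * z ≠ 0 := by
  rw [mem_ball_zero_iff] at hz
  have hw : ‖conj a * z‖ < 1 := by
    rw [norm_mul, norm_conj]; exact mul_lt_one_of_nonneg_of_lt_one_left (norm_nonneg a) ha hz.le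
  constructor
  · intro h
    have : c * conj a * z = -1 := by linear_combination h
    have := congrArg norm this
    rw [mul_assoc, norm_mul, hc, one_mul, norm_neg, norm_one] at this
    exact hw.ne this
  · intro h
    have : conj a * z = 1 := by linear_combination -h
    exact hw.ne (by rw [this, norm_one])

theorem deckMap_mem_ball (ha : ‖a‖ < 1) (hc : ‖c‖ = 1) {z : ℂ}
    (hz : z ∈ ball (0 : ℂ) 1) : deckMap a (conj a) c (conj c) z ∈ ball (0 : ℂ) 1 := by
  have hden : 1 - conj (-a) * (c * z) = 1 + c * conj a * z := by rw [map_neg]; ring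
  have hnum : c * z - -a = c * (z + conj c * a) := by linear_combination -a * mul_conj_eq_one hc
  have hpos := norm_pos_iff.mpr (deckMap_denominators_ne_zero ha hc hz).1
  rw [mem_ball_zero_iff] at hz ⊢
  rw [deckMap, ← hnum, ← hden, norm_div, div_lt_one (by rwa [hden])]
  exact norm_sub_lt_norm_one_sub_conj_mul (by rwa [norm_neg]) (by rwa [norm_mul, hc, one_mul])

theorem continuousOn_deckMap (ha : ‖a‖ < 1) (hc : ‖c‖ = 1) :
    ContinuousOn (deckMap a (conj a) c (conj c)) (ball (0 : ℂ) 1) :=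
  ContinuousOn.div (by fun_prop) (by fun_prop) fun _ hz =>
    (deckMap_denominators_ne_zero ha hc hz).1

theorem countable_ball_inter_fixedPoints_deckMap (ha : ‖a‖ < 1) (ha0 : a ≠ 0)
    (hc : ‖c‖ = 1) : (ball (0 : ℂ) 1 ∩ fixedPoints (deckMap a (conj a) c (conj c))).Countable := by
  have hc0 : c ≠ 0 := norm_ne_zero_iff.mp (by rw [hc]; exact one_ne_zero)
  refine ((finite_setOf_quadratic_eq_zero (q := 1 - c) (r := -a)
    (mul_ne_zero hc0 ((map_ne_zero (starRingEnd ℂ)).mpr ha0))).subset ?_).countable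
  rintro z ⟨hz, hfix⟩
  have hfix : deckMap a (conj a) c (conj c) z = z := hfix
  rw [deckMap, div_eq_iff (deckMap_denominators_ne_zero ha hc hz).1] at hfix
  show c * conj a * (z * z) + (1 - c) * z + -a = 0
  linear_combination -hfix + a * mul_conj_eq_one hc

end Disc

/-- For `B z = z (z - a₁)(z + conj c · a₁)/((1 - conj a₁ z)(1 + c conj a₁ z))`
with `|c| = 1` and `c + conj c = -1 - |a₁|²`, the group of continuous self-maps
of the disc leaving `B` invariant is generated by
`M z = c (z + conj c · a₁)/(1 + c conj a₁ z)`, which has order `3`. -/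
theorem degree_three_invariant_group (a₁ c : ℂ) (ha₁ : ‖a₁‖ < 1)
    (ha₁0 : a₁ ≠ 0) (hc : ‖c‖ = 1)
    (hcc : c + (starRingEnd ℂ) c = -1 - (‖a₁‖ : ℂ) ^ 2)
    (B : ℂ → ℂ)
    (hB : ∀ z, B z = z * ((z - a₁) / (1 - (starRingEnd ℂ) a₁ * z)) *
      ((z + (starRingEnd ℂ) c * a₁) / (1 + c * (starRingEnd ℂ) a₁ * z)))
    (M : ℂ → ℂ)
    (hM : ∀ z, M z = c * (z + (starRingEnd ℂ) c * a₁) /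
      (1 + c * (starRingEnd ℂ) a₁ * z)) :
    (∀ z ∈ Metric.ball (0 : ℂ) 1, B (M z) = B z) ∧
      (∀ z ∈ Metric.ball (0 : ℂ) 1, M^[3] z = z) ∧
      (∃ z ∈ Metric.ball (0 : ℂ) 1, M z ≠ z) ∧
      (∃ z ∈ Metric.ball (0 : ℂ) 1, M^[2] z ≠ z) ∧
      ∀ N : ℂ → ℂ, ContinuousOn N (Metric.ball (0 : ℂ) 1) →
        Set.MapsTo N (Metric.ball (0 : ℂ) 1) (Metric.ball (0 : ℂ) 1) →
        (∀ z ∈ Metric.ball (0 : ℂ) 1, B (N z) = B z) →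
        ∃ j : ℕ, ∀ z ∈ Metric.ball (0 : ℂ) 1, N z = M^[j] z := by
  have hck := mul_conj_eq_one hc
  have hab := mul_conj_ne_one ha₁
  have hsum : c + conj c = -1 - a₁ * conj a₁ := by rwa [mul_conj']
  have hden := fun z (hz : z ∈ ball (0 : ℂ) 1) => deckMap_denominators_ne_zero ha₁ hc hz
  obtain rfl : B = blaschke a₁ (conj a₁) c (conj c) :=
    funext fun z => by rw [hB, blaschke, mul_div_assoc' z, div_mul_div_comm]
  obtain rfl : M = deckMap a₁ (conj a₁) c (conj c) := funext hM
  set M := deckMap a₁ (conj a₁) c (conj c) with hMdef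
  have hM3 (z) (hz : z ∈ ball (0 : ℂ) 1) : M^[3] z = z :=
    deckMap_deckMap_deckMap hck hsum hab (hden z hz).1 (hden z hz).2
  have hM0 : M 0 = a₁ := by
    rw [hMdef, deckMap, zero_add, mul_zero, add_zero, div_one, ← mul_assoc, hck, one_mul]
  have h0 : (0 : ℂ) ∈ ball (0 : ℂ) 1 := mem_ball_self one_pos
  refine ⟨fun z hz => ?_, hM3, ⟨0, h0, by rwa [hM0]⟩, ⟨0, h0, fun h => ha₁0 ?_⟩,
    fun N hNc hNm hNB => ?_⟩
  · have hMz := hden _ (deckMap_mem_ball ha₁ hc hz)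
    exact blaschke_deckMap hck hsum hab (hden z hz).1 (hden z hz).2 hMz.1 hMz.2
  · -- if `M² 0 = 0` then `0 = M³ 0 = M 0 = a₁`
    have := hM3 0 h0
    rwa [iterate_succ_apply', h, hM0] at this
  have hconn : IsPreconnected (ball (0 : ℂ) 1 \ fixedPoints M) := by
    rw [← sdiff_self_inter]
    exact ((countable_ball_inter_fixedPoints_deckMap ha₁ ha₁0 hc).isPathConnected_ball_diff
      (by simp)).isConnected.isPreconnected
  obtain ⟨j, hj⟩ := exists_eqOn_iterate_of_isPeriodicPt Nat.prime_three
    (continuousOn_deckMap ha₁ hc) (fun z hz => deckMap_mem_ball ha₁ hc hz) hM3 hconn hNc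
    fun z hz => by
      rcases eq_or_eq_deckMap_of_blaschke_eq hck hsum hab (hden z hz).1 (hden z hz).2
        (hden _ (hNm hz)).1 (hden _ (hNm hz)).2 (hNB z hz) with h | h | h
      exacts [⟨0, h⟩, ⟨1, h⟩, ⟨2, h⟩]
  exact ⟨j, fun z hz => hj hz⟩
end

section
/- For the Blaschke product B(z) = z⁴, the group of continuous self-maps M of the closed unit disc with B ∘ M = B is the cyclic group of order 4 generated by M(z) = iz. -/
open Complex

open Metric Set in
lemma punctured_disc_pathConnected :
    IsPathConnected (Metric.closedBall (0 : ℂ) 1 \ {0}) := by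
  have hrank : 1 < Module.rank ℝ ℂ := by
    rw [Complex.rank_real_complex]; norm_num
  have h0 : IsPathConnected ({(0 : ℂ)}ᶜ) :=
    isPathConnected_compl_singleton_of_one_lt_rank hrank 0
  set f : ℂ → ℂ := fun z => (min 1 ‖z‖⁻¹ : ℝ) • z with hf_def
  have hf : ContinuousOn f ({(0 : ℂ)}ᶜ) := by
    intro z hz
    have h1 : ContinuousWithinAt (fun w : ℂ => ‖w‖⁻¹) ({(0 : ℂ)}ᶜ) z :=
      (continuous_norm.continuousWithinAt).inv₀ (by simpa using hz)
    exact (Filter.Tendsto.min continuousWithinAt_const h1).smul continuousWithinAt_id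
  have himg : f '' ({(0 : ℂ)}ᶜ) = Metric.closedBall (0 : ℂ) 1 \ {0} := by
    ext z
    constructor
    · rintro ⟨w, hw, rfl⟩
      have hw0 : w ≠ 0 := hw
      have hnorm : (0 : ℝ) < ‖w‖ := norm_pos_iff.mpr hw0
      have hmin : (0 : ℝ) < min 1 ‖w‖⁻¹ := lt_min one_pos (inv_pos.mpr hnorm)
      constructor
      · rw [mem_closedBall_zero_iff]
        show ‖(min 1 ‖w‖⁻¹ : ℝ) • w‖ ≤ 1
        rw [norm_smul, Real.norm_eq_abs, abs_of_pos hmin]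
        calc min 1 ‖w‖⁻¹ * ‖w‖ ≤ ‖w‖⁻¹ * ‖w‖ :=
              mul_le_mul_of_nonneg_right (min_le_right _ _) (norm_nonneg _)
          _ = 1 := inv_mul_cancel₀ (ne_of_gt hnorm)
      · simp only [mem_singleton_iff]
        exact smul_ne_zero (ne_of_gt hmin) hw0
    · rintro ⟨hz1, hz0⟩
      have hz0' : z ≠ 0 := hz0
      refine ⟨z, hz0', ?_⟩
      have h1 : ‖z‖ ≤ 1 := by simpa [dist_zero_right] using hz1
      have hzn : (0 : ℝ) < ‖z‖ := norm_pos_iff.mpr hz0'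
      have hm : min 1 ‖z‖⁻¹ = 1 := min_eq_left (by
        rw [le_inv_comm₀ one_pos hzn]; simpa using h1)
      show (min 1 ‖z‖⁻¹ : ℝ) • z = z
      rw [hm, one_smul]
  rw [← himg]
  exact h0.image' hf

lemma root_of_pow_four (w : ℂ) (hw : w ^ 4 = 1) :
    ∃ j : ℕ, j < 4 ∧ w = Complex.I ^ j := by
  have hI : Complex.I ^ 2 = -1 := Complex.I_sq
  have h2 : (w ^ 2 - 1) * (w ^ 2 + 1) = 0 := by linear_combination hw
  rcases mul_eq_zero.mp h2 with h | h
  · have : (w - 1) * (w + 1) = 0 := by linear_combination h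
    rcases mul_eq_zero.mp this with h' | h'
    · exact ⟨0, by norm_num, by linear_combination h'⟩
    · exact ⟨2, by norm_num, by linear_combination h' - hI⟩
  · have : (w - Complex.I) * (w + Complex.I) = 0 := by
      linear_combination h - hI
    rcases mul_eq_zero.mp this with h' | h'
    · exact ⟨1, by norm_num, by linear_combination h'⟩
    · refine ⟨3, by norm_num, ?_⟩
      have h3 : Complex.I ^ 3 = -Complex.I := by
        rw [pow_succ, hI]; ring
      linear_combination h' - h3

/-- The group of continuous self-maps of the closed unit disc leaving
`B z = z⁴` invariant is the cyclic group of order `4` generated by `M z = i z`. -/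
theorem fourth_power_invariant_group :
    (∀ M : ℂ → ℂ, ContinuousOn M (Metric.closedBall (0 : ℂ) 1) →
      Set.MapsTo M (Metric.closedBall (0 : ℂ) 1) (Metric.closedBall (0 : ℂ) 1) →
      (∀ z ∈ Metric.closedBall (0 : ℂ) 1, (M z) ^ 4 = z ^ 4) →
      ∃ j : ℕ, j < 4 ∧ ∀ z ∈ Metric.closedBall (0 : ℂ) 1,
        M z = Complex.I ^ j * z) ∧
    (∀ j : ℕ, ∀ z ∈ Metric.closedBall (0 : ℂ) 1,
      (Complex.I ^ j * z) ^ 4 = z ^ 4) ∧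
    Complex.I ^ 4 = 1 ∧ Complex.I ^ 2 ≠ 1 := by
  have hI4 : Complex.I ^ 4 = 1 := by
    rw [show (4 : ℕ) = 2 * 2 from rfl, pow_mul, Complex.I_sq]; norm_num
  refine ⟨?_, ?_, hI4, ?_⟩
  · intro M hMcont _hMmaps hMinv
    set S : Set ℂ := Metric.closedBall (0 : ℂ) 1 with hS
    set S' : Set ℂ := S \ {0} with hS'
    have hM0 : M 0 = 0 := by
      have h0S : (0 : ℂ) ∈ S := by simp [hS]
      have h4 : M 0 ^ 4 = 0 := by simpa using hMinv 0 h0S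
      exact pow_eq_zero_iff (by norm_num : (4 : ℕ) ≠ 0) |>.mp h4
    have h1S' : (1 : ℂ) ∈ S' := ⟨by simp [hS], by simp⟩
    set g : ℂ → ℂ := fun z => M z / z with hg_def
    have hgcont : ContinuousOn g S' := by
      exact ContinuousOn.div (hMcont.mono Set.diff_subset) continuousOn_id
        (fun z hz => hz.2)
    have hgroot : ∀ z ∈ S', (g z) ^ 4 = 1 := by
      intro z hz
      have hz0 : z ≠ 0 := hz.2
      show (M z / z) ^ 4 = 1
      rw [div_pow, div_eq_one_iff_eq (pow_ne_zero _ hz0)]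
      exact hMinv z hz.1
    have hpre : IsPreconnected S' := punctured_disc_pathConnected.isConnected.isPreconnected
    have himg_sub : g '' S' ⊆ {1, -1, Complex.I, -Complex.I} := by
      rintro _ ⟨z, hz, rfl⟩
      obtain ⟨j, hj, hw⟩ := root_of_pow_four (g z) (hgroot z hz)
      simp only [Set.mem_insert_iff, Set.mem_singleton_iff]
      interval_cases j
      · left; simpa using hw
      · right; right; left; simpa using hw
      · right; left; rw [hw, Complex.I_sq]
      · right; right; right
        rw [hw, pow_succ, Complex.I_sq]; ring
    have hsubsing : (g '' S').Subsingleton := by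
      by_contra hcon
      have hnt : (g '' S').Nontrivial := Set.not_subsingleton_iff.mp hcon
      have hinf : (g '' S').Infinite :=
        (hpre.image g hgcont).infinite_of_nontrivial hnt
      have hfin : (g '' S').Finite :=
        Set.Finite.subset (by
          apply Set.Finite.insert; apply Set.Finite.insert; apply Set.Finite.insert
          exact Set.finite_singleton _) himg_sub
      exact hinf hfin
    obtain ⟨j, hj, hw⟩ := root_of_pow_four (M 1) (by simpa using hMinv 1 h1S'.1)
    refine ⟨j, hj, ?_⟩
    intro z hz
    rcases eq_or_ne z 0 with rfl | hz0
    · simp [hM0]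
    · have hzS' : z ∈ S' := ⟨hz, hz0⟩
      have heq : g z = g 1 := hsubsing (Set.mem_image_of_mem g hzS')
        (Set.mem_image_of_mem g h1S')
      have hg1 : g 1 = M 1 := by show M 1 / 1 = M 1; rw [div_one]
      have h' : M z / z = M 1 := heq.trans hg1
      rw [div_eq_iff hz0] at h'
      rw [h', hw]
  · intro j z _
    rw [mul_pow, ← pow_mul, mul_comm j 4, pow_mul, hI4, one_pow, one_mul]
  · intro h
    rw [Complex.I_sq] at h
    exact (by norm_num : (-1 : ℂ) ≠ 1) h
end

section
/- Let a₁, a₂, a₃ be distinct nonzero points of 𝔻 satisfying a₁ + \bar{a₁}a₂a₃ = a₂ + a₃, and let B(z) = z ∏_{i=1}^{3}(z-a_i)/(1-\bar{a_i}z). Then B can be decomposed as B = B₂ ∘ B₁ with B₁(z) = z(z-a₁)/(1-\bar{a₁}z) and B₂(z) = z(z+a₂a₃)/(1+\overline{a₂a₃}z). -/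
/-!
The side condition `a₁ + conj a₁ · a₂a₃ = a₂ + a₃` is exactly what makes the quadratic
`z (z - a₁) + a₂a₃ (1 - conj a₁ · z)` factor as `(z - a₂)(z - a₃)`, and its conjugate makes
`(1 - conj a₁ · z) + conj (a₂a₃) · z (z - a₁)` factor as `(1 - conj a₂ · z)(1 - conj a₃ · z)`.
Dividing both by `1 - conj a₁ · z` shows `B₁ + a₂a₃` and `1 + conj (a₂a₃) B₁` are the numerator and
denominator of the last two Blaschke factors, so `B₂ ∘ B₁ = B`.
-/

section QuadraticIdentities

variable {R : Type*} [CommRing R] {p q u v : R}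

theorem sub_mul_sub_eq_of_add_mul_mul_eq (h : p + q * u * v = u + v) (z : R) :
    z * (z - p) + u * v * (1 - q * z) = (z - u) * (z - v) := by
  linear_combination (-z) * h

theorem one_sub_mul_one_sub_mul_eq_of_add_mul_mul_eq (h : p + q * u * v = u + v) (z : R) :
    (1 - p * z) + u * v * (z * (z - q)) = (1 - u * z) * (1 - v * z) := by
  linear_combination (-z) * h

end QuadraticIdentities

theorem mul_div_eq_mul_add_div_one_add_mul {K : Type*} [Field K] {w x c s t N D : K}
    (hw : w = x / c) (hN : x + s * c = N) (hD : c + t * x = D) :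
    w * (N / D) = w * (w + s) / (1 + t * w) := by
  subst hw
  rcases eq_or_ne c 0 with rfl | hc
  · simp
  have hnum : x / c + s = N / c := by rw [← hN]; field_simp
  have hden : 1 + t * (x / c) = D / c := by rw [← hD]; field_simp
  rw [hnum, hden, mul_div_assoc, div_div_div_cancel_right₀ hc]

theorem degree_four_decomposition_general (a₁ a₂ a₃ : ℂ)
    (hcond : a₁ + (starRingEnd ℂ) a₁ * a₂ * a₃ = a₂ + a₃) :
    ∀ z : ℂ, ‖z‖ < 1 →
      z * ((z - a₁) / (1 - (starRingEnd ℂ) a₁ * z)) *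
        ((z - a₂) / (1 - (starRingEnd ℂ) a₂ * z)) *
        ((z - a₃) / (1 - (starRingEnd ℂ) a₃ * z)) =
      (z * ((z - a₁) / (1 - (starRingEnd ℂ) a₁ * z))) *
        ((z * ((z - a₁) / (1 - (starRingEnd ℂ) a₁ * z))) + a₂ * a₃) /
        (1 + (starRingEnd ℂ) (a₂ * a₃) * (z * ((z - a₁) / (1 - (starRingEnd ℂ) a₁ * z)))) := by
  intro z _
  have hcond_conj : (starRingEnd ℂ) a₁ + a₁ * (starRingEnd ℂ) a₂ * (starRingEnd ℂ) a₃ =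
      (starRingEnd ℂ) a₂ + (starRingEnd ℂ) a₃ := by
    simpa using congrArg (starRingEnd ℂ) hcond
  rw [mul_assoc _ ((z - a₂) / _), div_mul_div_comm, map_mul]
  exact mul_div_eq_mul_add_div_one_add_mul (mul_div_assoc z _ _).symm
    (sub_mul_sub_eq_of_add_mul_mul_eq hcond z)
    (one_sub_mul_one_sub_mul_eq_of_add_mul_mul_eq hcond_conj z)

/-- A degree-4 Blaschke product whose zeros satisfy
`a₁ + conj a₁ · a₂ a₃ = a₂ + a₃` decomposes as `B = B₂ ∘ B₁` with
`B₁ z = z (z - a₁)/(1 - conj a₁ z)` and `B₂ w = w (w + a₂a₃)/(1 + conj (a₂a₃) w)`. -/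
theorem degree_four_decomposition (a₁ a₂ a₃ : ℂ)
    (h₁ : ‖a₁‖ < 1) (h₂ : ‖a₂‖ < 1) (h₃ : ‖a₃‖ < 1)
    (h₁0 : a₁ ≠ 0) (h₂0 : a₂ ≠ 0) (h₃0 : a₃ ≠ 0)
    (h12 : a₁ ≠ a₂) (h13 : a₁ ≠ a₃) (h23 : a₂ ≠ a₃)
    (hcond : a₁ + (starRingEnd ℂ) a₁ * a₂ * a₃ = a₂ + a₃) :
    ∀ z : ℂ, ‖z‖ < 1 →
      z * ((z - a₁) / (1 - (starRingEnd ℂ) a₁ * z)) *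
        ((z - a₂) / (1 - (starRingEnd ℂ) a₂ * z)) *
        ((z - a₃) / (1 - (starRingEnd ℂ) a₃ * z)) =
      (z * ((z - a₁) / (1 - (starRingEnd ℂ) a₁ * z))) *
        ((z * ((z - a₁) / (1 - (starRingEnd ℂ) a₁ * z))) + a₂ * a₃) /
        (1 + (starRingEnd ℂ) (a₂ * a₃) * (z * ((z - a₁) / (1 - (starRingEnd ℂ) a₁ * z)))) :=
  degree_four_decomposition_general a₁ a₂ a₃ hcond
end
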